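/- arXiv:2207.13289 — 3 statements merged into one kernel-verified Lean document; each statement's English description precedes it below -/
import Mathlib

section
/- Let d and d' be two multisets of n points in ℝ² whose multiset distance is 1 (they differ in exactly one point). Let S_d and S_{d'} be the multisets of C(n,2) pairwise slopes of d and d' respectively, computed with the Slope convention. Then the multiset distance between S_d and S_{d'} is at most n − 1. -/
open MeasureTheory

/-- The multiset distance between two multisets: half the L1 distance between their
multiplicity functions, i.e. the number of records that must be changed to transform
one into the other (when they have equal size). -/
noncomputable def msDist {α : Type*} (d d' : Multiset α) : ℕ :=
  letI := Classical.decEq α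
  ((d - d').card + (d' - d).card) / 2

/-- The Slope convention for an unordered pair of points, as used by the `Slope`
subroutine: `(y'-y)/(x'-x)` if `x ≠ x'`; `sign(y'-y)·∞` if `x = x'` and the points differ
(under the canonical ordering of the unordered pair by increasing `y`, this sign is `+`);
and `0` if the two points are equal.  As a function of the unordered pair it is symmetric. -/
noncomputable def uslope (w w' : ℝ × ℝ) : EReal :=
  if w = w' then 0
  else if w.1 = w'.1 then ⊤
  else (((w'.2 - w.2) / (w'.1 - w.1) : ℝ) : EReal)

lemma uslope_symm (w w' : ℝ × ℝ) : uslope w w' = uslope w' w := by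
  unfold uslope
  rcases eq_or_ne w w' with h | h
  · simp [h]
  · rw [if_neg h, if_neg (Ne.symm h)]
    rcases eq_or_ne w.1 w'.1 with h1 | h1
    · simp [h1]
    · rw [if_neg h1, if_neg (Ne.symm h1)]
      norm_cast
      rw [div_eq_div_iff (by exact sub_ne_zero.mpr (Ne.symm h1)) (by exact sub_ne_zero.mpr h1)]
      ring

/-- The slope of an unordered pair of points. -/
noncomputable def slopeSym2 : Sym2 (ℝ × ℝ) → EReal :=
  Sym2.lift ⟨uslope, uslope_symm⟩

/-- The multiset of the `C(n,2)` pairwise slopes of a multiset `d` of `n` points in `ℝ²`,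
computed with the Slope convention: we take all unordered pairs of two (distinct indices
of) elements of `d` and map each to its slope. -/
noncomputable def slopesOf (d : Multiset (ℝ × ℝ)) : Multiset EReal :=
  letI := Classical.decEq (Sym2 (ℝ × ℝ))
  (d.sym2 - d.map (fun w => Sym2.mk w w)).map slopeSym2

/-!
Changing one point `a` of `d` into `b` only affects the `n - 1` slopes of pairs through that
point: writing `d = a ::ₘ c` and `d' = b ::ₘ c`, the slope multisets are the slopes of `a` resp.
`b` against `c`, each of size `n - 1`, plus the common slopes of `c`.
-/

section

open Multiset

variable {α : Type*}

theorem msDist_add_right (s t r : Multiset α) : msDist (s + r) (t + r) = msDist s t := by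
  classical
  simp only [msDist, add_tsub_add_eq_tsub_right]

theorem msDist_le_card_add_card (s t : Multiset α) :
    msDist s t ≤ (card s + card t) / 2 := by
  classical
  unfold msDist
  exact Nat.div_le_div_right <|
    Nat.add_le_add (card_le_card (Multiset.sub_le_self _ _)) (card_le_card (Multiset.sub_le_self _ _))

theorem exists_eq_cons_of_msDist_eq_one {d d' : Multiset α} (hcard : card d = card d')
    (h : msDist d d' = 1) : ∃ a b c, d = a ::ₘ c ∧ d' = b ::ₘ c := by
  classical
  unfold msDist at h
  have hd := congrArg card (sub_add_inter d d')
  have hd' := congrArg card (sub_add_inter d' d)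
  rw [card_add] at hd hd'
  rw [inter_comm] at hd'
  obtain ⟨a, ha⟩ := card_eq_one.mp (show card (d - d') = 1 by omega)
  obtain ⟨b, hb⟩ := card_eq_one.mp (show card (d' - d) = 1 by omega)
  refine ⟨a, b, d ∩ d', ?_, ?_⟩
  · rw [← singleton_add, ← ha, sub_add_inter]
  · rw [← singleton_add, ← hb, inter_comm, sub_add_inter]

end

namespace Multiset

variable {α : Type*}

theorem diag_le_sym2 (c : Multiset α) : c.map (fun w => s(w, w)) ≤ c.sym2 := by
  induction c using Multiset.induction_on with
  | empty => simp
  | cons a c ih =>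
    rw [map_cons, sym2_cons, map_cons, cons_add]
    exact cons_le_cons _ (ih.trans (le_add_left _ _))

theorem sym2_sub_diag_cons [DecidableEq (Sym2 α)] (a : α) (c : Multiset α) :
    (a ::ₘ c).sym2 - (a ::ₘ c).map (fun w => s(w, w))
      = c.map (fun x => s(a, x)) + (c.sym2 - c.map (fun w => s(w, w))) := by
  rw [sym2_cons, map_cons, map_cons, ← singleton_add, ← singleton_add, add_assoc,
    add_tsub_add_eq_tsub_left, add_tsub_assoc_of_le (diag_le_sym2 c)]

end Multiset

theorem slopesOf_cons (a : ℝ × ℝ) (c : Multiset (ℝ × ℝ)) :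
    slopesOf (a ::ₘ c) = c.map (uslope a) + slopesOf c := by
  unfold slopesOf
  rw [@Multiset.sym2_sub_diag_cons _ (Classical.decEq _), Multiset.map_add, Multiset.map_map]
  congr

/-- **Sensitivity of the Theil-Sen slope computation**: if two size-`n` multisets of points
have multiset distance `1`, then their multisets of `C(n,2)` pairwise slopes have
multiset distance at most `n - 1`. -/
theorem slopes_sensitivity (n : ℕ) (d d' : Multiset (ℝ × ℝ))
    (hd : Multiset.card d = n) (hd' : Multiset.card d' = n)
    (hnb : msDist d d' = 1) :
    msDist (slopesOf d) (slopesOf d') ≤ n - 1 := by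
  obtain ⟨a, b, c, rfl, rfl⟩ := exists_eq_cons_of_msDist_eq_one (hd.trans hd'.symm) hnb
  rw [slopesOf_cons, slopesOf_cons, msDist_add_right]
  refine (msDist_le_card_add_card _ _).trans ?_
  simp only [Multiset.card_map, Multiset.card_cons] at hd ⊢
  omega
end

section
/- Fix k ≥ 1 and shifts r_1,…,r_k ∈ {1,…,⌈n/2⌉}. Consider the map that takes a multiset d of n points in ℝ², partitions it into a bin B_1 of the ⌊n/2⌋ points with smallest x-values and a bin B_2 of the remaining ⌈n/2⌉ points, and for each p ∈ [k] and each i ∈ {1,…,⌊n/2⌋} computes the slope between the i-th point of B_1 and the ((i + r_p) mod ⌈n/2⌉)-th point of B_2 (under any fixed orderings of the bins that agree on common elements). If d and d' have multiset distance 1, then (a) the resulting bins differ in at most one element in each of B_1 and B_2, and (b) the resulting multisets of k·⌊n/2⌋ slopes have multiset distance at most 2k. -/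
open MeasureTheory

/-- The list of the points of `d` sorted lexicographically (primarily by `x`-value). -/
noncomputable def sortLex (d : Multiset (ℝ × ℝ)) : List (ℝ × ℝ) :=
  ((d.map (toLex : ℝ × ℝ → ℝ ×ₗ ℝ)).sort (· ≤ ·)).map (ofLex)

/-- The bin `B₁` of the `⌊n/2⌋` points of `d` with smallest `x`-values. -/
noncomputable def binList1 (d : Multiset (ℝ × ℝ)) : List (ℝ × ℝ) :=
  (sortLex d).take (Multiset.card d / 2)

/-- The bin `B₂` of the remaining `⌈n/2⌉` points of `d`. -/
noncomputable def binList2 (d : Multiset (ℝ × ℝ)) : List (ℝ × ℝ) :=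
  (sortLex d).drop (Multiset.card d / 2)

/-- Two lists (orderings of the bins) agree on common elements: they have the same length
and coincide except possibly at one position. -/
def agreeExceptOne (L L' : List (ℝ × ℝ)) : Prop :=
  L.length = L'.length ∧ ∃ j : ℕ, ∀ i : ℕ, i ≠ j → L.getD i (0, 0) = L'.getD i (0, 0)

/-- The multiset of `k·⌊n/2⌋` slopes produced by matching, for each `p ∈ [k]`, the `i`-th
point of the (ordered) bin `V₁` with the `((i + r p) mod ⌈n/2⌉)`-th point of the (ordered)
bin `V₂`, for `i = 1, …, ⌊n/2⌋`. -/
noncomputable def matchSlopes (k : ℕ) (r : Fin k → ℕ) (V1 V2 : List (ℝ × ℝ)) :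
    Multiset EReal :=
  (Finset.univ : Finset (Fin k)).val.bind (fun p =>
    (Multiset.range V1.length).map (fun i =>
      uslope (V1.getD i (0, 0)) (V2.getD ((i + r p) % V2.length) (0, 0))))

/-! Write `d = x ::ₘ u` and `d' = y ::ₘ u`. The sorted list of `d` is the sorted list of `u`
with `x` inserted, and inserting one element into a list changes its first `m + 1` entries,
as a multiset, only by adding one element to its first `m` entries, and its entries from
position `m` on only by adding one element. So each bin of `d` and of `d'` is a common multiset
plus one point.

For the slopes, the orderings differ only at positions `j₁` of `B₁` and `j₂` of `B₂`. For a
shift `r_p`, the slope at index `i` can change only if `i = j₁` or `(i + r_p) mod |B₂| = j₂`,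
and as `|B₁| ≤ |B₂|` the latter holds for at most one `i`. So at most `2k` slopes change. -/

lemma msDist_add_left {α : Type*} (u a b : Multiset α) :
    msDist (u + a) (u + b) = msDist a b := by
  classical
  simp only [msDist, add_tsub_add_eq_tsub_left]

lemma msDist_le_of_card_le {α : Type*} {a b : Multiset α} {m : ℕ}
    (ha : Multiset.card a ≤ m) (hb : Multiset.card b ≤ m) : msDist a b ≤ m := by
  classical
  have h1 := (Multiset.card_le_card (tsub_le_self : a - b ≤ a)).trans ha
  have h2 := (Multiset.card_le_card (tsub_le_self : b - a ≤ b)).trans hb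
  simp only [msDist]
  omega

lemma msDist_cons_cons_le_one {α : Type*} (x y : α) (u : Multiset α) :
    msDist (x ::ₘ u) (y ::ₘ u) ≤ 1 := by
  rw [← Multiset.singleton_add, ← Multiset.singleton_add, add_comm {x} u, add_comm {y} u,
    msDist_add_left]
  exact msDist_le_of_card_le (by simp) (by simp)

lemma exists_cons_eq_of_msDist_eq_one {α : Type*} {d d' : Multiset α}
    (hcard : Multiset.card d = Multiset.card d') (h : msDist d d' = 1) :
    ∃ (u : Multiset α) (x y : α), d = x ::ₘ u ∧ d' = y ::ₘ u := by
  classical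
  have hd := Multiset.sub_add_inter d d'
  have hd' := Multiset.sub_add_inter d' d
  rw [Multiset.inter_comm] at hd'
  have hc := congrArg Multiset.card hd
  have hc' := congrArg Multiset.card hd'
  simp only [Multiset.card_add] at hc hc'
  have hdist : (Multiset.card (d - d') + Multiset.card (d' - d)) / 2 = 1 := h
  obtain ⟨x, hx⟩ := Multiset.card_eq_one.1 (show Multiset.card (d - d') = 1 by omega)
  obtain ⟨y, hy⟩ := Multiset.card_eq_one.1 (show Multiset.card (d' - d) = 1 by omega)
  rw [hx, Multiset.singleton_add] at hd
  rw [hy, Multiset.singleton_add] at hd'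
  exact ⟨d ∩ d', x, y, hd.symm, hd'.symm⟩

lemma Multiset.sort_cons_eq_orderedInsert {α : Type*} [LinearOrder α] (a : α)
    (s : Multiset α) :
    (a ::ₘ s).sort (· ≤ ·) = (s.sort (· ≤ ·)).orderedInsert (· ≤ ·) a :=
  Quot.inductionOn s fun l => by simp [List.mergeSort_eq_insertionSort]

namespace List

variable {α : Type*} (r : α → α → Prop) [DecidableRel r] (a : α)

lemma exists_take_succ_orderedInsert (l : List α) (m : ℕ) :
    ∃ z, (↑((l.orderedInsert r a).take (m + 1)) : Multiset α) = z ::ₘ ↑(l.take m) := by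
  induction l generalizing m with
  | nil => exact ⟨a, by simp⟩
  | cons b l ih =>
    by_cases hab : r a b
    · exact ⟨a, by simp [hab]⟩
    · cases m with
      | zero => exact ⟨b, by simp [hab]⟩
      | succ m =>
        obtain ⟨z, hz⟩ := ih m
        refine ⟨z, ?_⟩
        simp only [orderedInsert, hab, if_false, take_succ_cons, ← Multiset.cons_coe, hz]
        exact Multiset.cons_swap _ _ _

lemma exists_drop_orderedInsert (l : List α) {m : ℕ} (hm : m ≤ l.length) :
    ∃ z, (↑((l.orderedInsert r a).drop m) : Multiset α) = z ::ₘ ↑(l.drop m) := by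
  induction l generalizing m with
  | nil => exact ⟨a, by simp_all⟩
  | cons b l ih =>
    cases m with
    | zero => exact ⟨a, by simpa using (perm_orderedInsert r a (b :: l))⟩
    | succ m =>
      by_cases hab : r a b
      · refine ⟨(b :: l)[m]'(by simp at hm ⊢; omega), ?_⟩
        rw [orderedInsert_cons, if_pos hab, drop_succ_cons, drop_eq_getElem_cons]
        rfl
      · obtain ⟨z, hz⟩ := ih (m := m) (by simpa using hm)
        exact ⟨z, by simpa [hab] using hz⟩

end List

lemma sortLex_cons (x : ℝ × ℝ) (u : Multiset (ℝ × ℝ)) :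
    sortLex (x ::ₘ u) =
      (((u.map toLex).sort (· ≤ ·)).orderedInsert (· ≤ ·) (toLex x)).map ofLex := by
  rw [sortLex, Multiset.map_cons, Multiset.sort_cons_eq_orderedInsert]

lemma length_sortLex (d : Multiset (ℝ × ℝ)) : (sortLex d).length = Multiset.card d := by
  simp [sortLex]

lemma exists_binList1_cons (x : ℝ × ℝ) (u : Multiset (ℝ × ℝ)) {m : ℕ}
    (hm : (Multiset.card u + 1) / 2 = m + 1) :
    ∃ z, (↑(binList1 (x ::ₘ u)) : Multiset (ℝ × ℝ)) = z ::ₘ ↑((sortLex u).take m) := by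
  obtain ⟨z, hz⟩ :=
    List.exists_take_succ_orderedInsert (· ≤ ·) (toLex x) ((u.map toLex).sort (· ≤ ·)) m
  refine ⟨ofLex z, ?_⟩
  rw [binList1, sortLex_cons, Multiset.card_cons, hm, ← List.map_take, ← Multiset.map_coe, hz,
    Multiset.map_cons, sortLex, ← List.map_take, ← Multiset.map_coe]

lemma exists_binList2_cons (x : ℝ × ℝ) (u : Multiset (ℝ × ℝ)) :
    ∃ z, (↑(binList2 (x ::ₘ u)) : Multiset (ℝ × ℝ)) =
      z ::ₘ ↑((sortLex u).drop ((Multiset.card u + 1) / 2)) := by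
  obtain ⟨z, hz⟩ :=
    List.exists_drop_orderedInsert (· ≤ ·) (toLex x) ((u.map toLex).sort (· ≤ ·))
      (m := (Multiset.card u + 1) / 2) (by rw [Multiset.length_sort, Multiset.card_map]; omega)
  refine ⟨ofLex z, ?_⟩
  rw [binList2, sortLex_cons, Multiset.card_cons, ← List.map_drop, ← Multiset.map_coe, hz,
    Multiset.map_cons, sortLex, ← List.map_drop, ← Multiset.map_coe]

lemma msDist_binList1_cons_le_one (x y : ℝ × ℝ) (u : Multiset (ℝ × ℝ)) :
    msDist (↑(binList1 (x ::ₘ u)) : Multiset (ℝ × ℝ)) ↑(binList1 (y ::ₘ u)) ≤ 1 := by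
  rcases hm : (Multiset.card u + 1) / 2 with _ | m
  · simp [binList1, hm, msDist]
  · obtain ⟨z, hz⟩ := exists_binList1_cons x u hm
    obtain ⟨z', hz'⟩ := exists_binList1_cons y u hm
    rw [hz, hz']
    exact msDist_cons_cons_le_one z z' _

lemma msDist_binList2_cons_le_one (x y : ℝ × ℝ) (u : Multiset (ℝ × ℝ)) :
    msDist (↑(binList2 (x ::ₘ u)) : Multiset (ℝ × ℝ)) ↑(binList2 (y ::ₘ u)) ≤ 1 := by
  obtain ⟨z, hz⟩ := exists_binList2_cons x u
  obtain ⟨z', hz'⟩ := exists_binList2_cons y u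
  rw [hz, hz']
  exact msDist_cons_cons_le_one z z' _

lemma Multiset.card_bind_le {ι β : Type*} (t : Multiset ι) (F : ι → Multiset β) {c : ℕ}
    (h : ∀ p ∈ t, Multiset.card (F p) ≤ c) : Multiset.card (t.bind F) ≤ Multiset.card t * c := by
  rw [Multiset.card_bind, ← smul_eq_mul, ← Multiset.card_map (Multiset.card ∘ F)]
  refine Multiset.sum_le_card_nsmul (t.map (Multiset.card ∘ F)) c fun n hn => ?_
  obtain ⟨p, hp, rfl⟩ := Multiset.mem_map.1 hn
  exact h p hp

lemma msDist_bind_map_le {ι α β : Type*} (t : Multiset ι) (s : Finset α) (B : ι → Finset α)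
    (f g : ι → α → β) {c : ℕ} (hfg : ∀ p ∈ t, ∀ i ∈ s, i ∉ B p → f p i = g p i)
    (hB : ∀ p ∈ t, (B p).card ≤ c) :
    msDist (t.bind fun p => s.val.map (f p)) (t.bind fun p => s.val.map (g p)) ≤
      Multiset.card t * c := by
  classical
  have hsplit : ∀ (h : ι → α → β), (t.bind fun p => s.val.map (h p)) =
      (t.bind fun p => (s.filter (· ∉ B p)).val.map (h p)) +
        t.bind fun p => (s.filter (· ∈ B p)).val.map (h p) := by
    intro h
    rw [← Multiset.bind_add]
    refine Multiset.bind_congr fun p _ => ?_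
    rw [← Multiset.map_add, Finset.filter_val, Finset.filter_val, add_comm,
      Multiset.filter_add_not]
  have hcommon : (t.bind fun p => (s.filter (· ∉ B p)).val.map (f p)) =
      t.bind fun p => (s.filter (· ∉ B p)).val.map (g p) :=
    Multiset.bind_congr fun p hp => Multiset.map_congr rfl fun i hi => by
      rw [Finset.mem_val, Finset.mem_filter] at hi
      exact hfg p hp i hi.1 hi.2
  have hextra : ∀ h : ι → α → β,
      Multiset.card (t.bind fun p => (s.filter (· ∈ B p)).val.map (h p)) ≤
        Multiset.card t * c :=
    fun h => Multiset.card_bind_le _ _ fun p hp => by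
      rw [Multiset.card_map]
      exact (Finset.card_le_card fun i hi => (Finset.mem_filter.1 hi).2).trans (hB p hp)
  rw [hsplit f, hsplit g, hcommon, msDist_add_left]
  exact msDist_le_of_card_le (hextra f) (hextra g)

lemma card_filter_add_mod_eq_le_one (N r j : ℕ) :
    ((Finset.range N).filter fun i => (i + r) % N = j).card ≤ 1 := by
  refine Finset.card_le_one.2 fun a ha b hb => ?_
  simp only [Finset.mem_filter, Finset.mem_range] at ha hb
  have hab : a % N = b % N :=
    Nat.ModEq.add_right_cancel' r (show (a + r) % N = (b + r) % N by rw [ha.2, hb.2])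
  rwa [Nat.mod_eq_of_lt ha.1, Nat.mod_eq_of_lt hb.1] at hab

lemma msDist_matchSlopes_le (k : ℕ) (r : Fin k → ℕ) {L1 L2 L1' L2' : List (ℝ × ℝ)}
    (h1 : agreeExceptOne L1 L1') (h2 : agreeExceptOne L2 L2')
    (hlen : L1.length ≤ L2.length) :
    msDist (matchSlopes k r L1 L2) (matchSlopes k r L1' L2') ≤ 2 * k := by
  obtain ⟨hlen1, j1, hj1⟩ := h1
  obtain ⟨hlen2, j2, hj2⟩ := h2
  rw [matchSlopes, matchSlopes, ← hlen1, ← hlen2, ← Finset.range_val, mul_comm]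
  convert msDist_bind_map_le _ _
    (fun p => insert j1 ((Finset.range L2.length).filter fun i => (i + r p) % L2.length = j2))
    _ _ (fun p _ i hi hiB => ?_) (fun p _ => ?_)
  · simp
  · simp only [Finset.mem_insert, Finset.mem_filter, Finset.mem_range, not_or, not_and] at hiB
    rw [hj1 i hiB.1, hj2 _ (hiB.2 ((Finset.mem_range.1 hi).trans_le hlen))]
  · exact (Finset.card_insert_le _ _).trans
      (Nat.succ_le_succ (card_filter_add_mod_eq_le_one _ _ _))

theorem khalf_slopes_sensitivity_general
    (n k : ℕ) (r : Fin k → ℕ)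
    (d d' : Multiset (ℝ × ℝ))
    (hd : Multiset.card d = n) (hd' : Multiset.card d' = n)
    (hnb : msDist d d' = 1) :
    (msDist (↑(binList1 d) : Multiset (ℝ × ℝ)) (↑(binList1 d')) ≤ 1 ∧
      msDist (↑(binList2 d) : Multiset (ℝ × ℝ)) (↑(binList2 d')) ≤ 1) ∧
    (∀ L1 L2 L1' L2' : List (ℝ × ℝ),
      (↑L1 : Multiset (ℝ × ℝ)) = ↑(binList1 d) → (↑L2 : Multiset (ℝ × ℝ)) = ↑(binList2 d) →
      (↑L1' : Multiset (ℝ × ℝ)) = ↑(binList1 d') → (↑L2' : Multiset (ℝ × ℝ)) = ↑(binList2 d') →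
      agreeExceptOne L1 L1' → agreeExceptOne L2 L2' →
      msDist (matchSlopes k r L1 L2) (matchSlopes k r L1' L2') ≤ 2 * k) := by
  obtain ⟨u, x, y, rfl, rfl⟩ := exists_cons_eq_of_msDist_eq_one (hd.trans hd'.symm) hnb
  refine ⟨⟨msDist_binList1_cons_le_one x y u, msDist_binList2_cons_le_one x y u⟩, ?_⟩
  intro L1 L2 _ _ hL1 hL2 _ _ h1 h2
  refine msDist_matchSlopes_le k r h1 h2 ?_
  rw [(Multiset.coe_eq_coe.1 hL1).length_eq, (Multiset.coe_eq_coe.1 hL2).length_eq, binList1,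
    binList2, List.length_take, List.length_drop, length_sortLex]
  omega

/-- **Sensitivity of the kHalf slope-selection procedure.** If `d` and `d'` are size-`n`
multisets of points at multiset distance `1`, then (a) the two bins (the `⌊n/2⌋` points
with smallest `x`-values, and the rest) differ in at most one element each, and (b) for any
fixed orderings of the bins that agree on common elements, the resulting multisets of
`k·⌊n/2⌋` slopes have multiset distance at most `2k`. -/
theorem khalf_slopes_sensitivity
    (n k : ℕ) (hk : 1 ≤ k) (r : Fin k → ℕ)
    (hr : ∀ p, 1 ≤ r p ∧ r p ≤ (n + 1) / 2)
    (d d' : Multiset (ℝ × ℝ))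
    (hd : Multiset.card d = n) (hd' : Multiset.card d' = n)
    (hnb : msDist d d' = 1) :
    (msDist (↑(binList1 d) : Multiset (ℝ × ℝ)) (↑(binList1 d')) ≤ 1 ∧
      msDist (↑(binList2 d) : Multiset (ℝ × ℝ)) (↑(binList2 d')) ≤ 1) ∧
    (∀ L1 L2 L1' L2' : List (ℝ × ℝ),
      (↑L1 : Multiset (ℝ × ℝ)) = ↑(binList1 d) → (↑L2 : Multiset (ℝ × ℝ)) = ↑(binList2 d) →
      (↑L1' : Multiset (ℝ × ℝ)) = ↑(binList1 d') → (↑L2' : Multiset (ℝ × ℝ)) = ↑(binList2 d') →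
      agreeExceptOne L1 L1' → agreeExceptOne L2 L2' →
      msDist (matchSlopes k r L1 L2) (matchSlopes k r L1' L2') ≤ 2 * k) :=
  khalf_slopes_sensitivity_general n k r d d' hd hd' hnb
end

section
/- For every N ≥ 1, q ∈ (0,1), R > 0, θ ∈ (0,R), and ε > 0, the widened exponential mechanism DPWide(·, ε, (q, [−R,R], θ)) is ε-differentially private with respect to neighboring size-N multisets of reals. In particular, the utility function u_s(y) = −min_{z ∈ [y−θ, y+θ]} |#{i : s_i ≤ z} − qN| changes by at most 1, for every y ∈ [−R,R], when one element of the multiset s is changed. -/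
open MeasureTheory

/-- `ε`-differential privacy for randomized algorithms on size-`n` multisets. -/
def IsDP {W O : Type*} [MeasurableSpace O] (n : ℕ)
    (M : Multiset W → Measure O) (ε : ℝ) : Prop :=
  ∀ d d' : Multiset W, Multiset.card d = n → Multiset.card d' = n → msDist d d' = 1 →
    ∀ E : Set O, MeasurableSet E →
      M d E ≤ ENNReal.ofReal (Real.exp ε) * M d' E

/-- The widened utility function
`u_s(y) = - min_{z ∈ [y-θ, y+θ]} |#{i : s_i ≤ z} - q·N|`, for a multiset `s` of
extended reals (elements possibly `±∞`). -/
noncomputable def uWide (q θ : ℝ) (s : Multiset EReal) (y : ℝ) : ℝ :=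
  - sInf ((fun z : ℝ =>
      |((s.filter (fun t => t ≤ (z : EReal))).card : ℝ) - q * (Multiset.card s : ℝ)|) ''
    Set.Icc (y - θ) (y + θ))

/-- The widened exponential mechanism `DPWide(s, ε, (q, [-R,R], θ))`: the probability
distribution on `[-R, R]` whose density is proportional to `exp((ε/2)·u_s(y))`. -/
noncomputable def dpWide (ε q R θ : ℝ) (s : Multiset EReal) : Measure ℝ :=
  let μ := (volume.restrict (Set.Icc (-R) R)).withDensity
    (fun y => ENNReal.ofReal (Real.exp (ε / 2 * uWide q θ s y)))
  (μ Set.univ)⁻¹ • μ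

/-- counts of neighboring multisets differ by at most one -/
lemma neighbor_count (s s' : Multiset EReal)
    (hc : Multiset.card s = Multiset.card s') (hd : msDist s s' = 1) (z : ℝ) :
    |((s.filter (fun t => t ≤ (z : EReal))).card : ℝ) -
      ((s'.filter (fun t => t ≤ (z : EReal))).card : ℝ)| ≤ 1 := by
  letI := Classical.decEq EReal
  have h1 : s - s' + s ∩ s' = s := Multiset.sub_add_inter s s'
  have h2 : s' - s + s' ∩ s = s' := Multiset.sub_add_inter s' s
  have hins : s ∩ s' = s' ∩ s := Multiset.inter_comm s s'
  have hc1 : Multiset.card (s - s') + Multiset.card (s ∩ s') = Multiset.card s := by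
    rw [← Multiset.card_add, h1]
  have hc2 : Multiset.card (s' - s) + Multiset.card (s' ∩ s) = Multiset.card s' := by
    rw [← Multiset.card_add, h2]
  have hab : Multiset.card (s - s') = Multiset.card (s' - s) := by
    rw [hins] at hc1; omega
  have hd' : (Multiset.card (s - s') + Multiset.card (s' - s)) / 2 = 1 := hd
  have ha : Multiset.card (s - s') = 1 := by omega
  have hb : Multiset.card (s' - s) = 1 := by omega
  set p : EReal → Prop := fun t => t ≤ (z : EReal) with hp
  have key : ∀ w u v : Multiset EReal, u + v = w →
      ((w.filter p).card : ℝ) = ((u.filter p).card : ℝ) + ((v.filter p).card : ℝ) := by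
    intro w u v huv
    rw [← huv, Multiset.filter_add, Multiset.card_add]; push_cast; ring
  have e1 : ((s.filter p).card : ℝ)
      = (((s - s').filter p).card : ℝ) + (((s ∩ s').filter p).card : ℝ) :=
    key _ _ _ h1
  have e2 : ((s'.filter p).card : ℝ)
      = (((s' - s).filter p).card : ℝ) + (((s ∩ s').filter p).card : ℝ) := by
    rw [hins]; exact key _ _ _ h2
  have b1 : (((s - s').filter p).card : ℝ) ≤ 1 := by
    have := Multiset.card_le_card (Multiset.filter_le p (s - s'))
    rw [ha] at this; exact_mod_cast this
  have b2 : (((s' - s).filter p).card : ℝ) ≤ 1 := by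
    have := Multiset.card_le_card (Multiset.filter_le p (s' - s))
    rw [hb] at this; exact_mod_cast this
  have n1 : (0:ℝ) ≤ (((s - s').filter p).card : ℝ) := by positivity
  have n2 : (0:ℝ) ≤ (((s' - s).filter p).card : ℝ) := by positivity
  rw [e1, e2, abs_le]; constructor <;> linarith

/-- comparison of infima -/
lemma sInf_image_le {S : Set ℝ} (hS : S.Nonempty) {g h : ℝ → ℝ}
    (hg0 : ∀ x, 0 ≤ g x) (hle : ∀ x ∈ S, g x ≤ h x + 1) :
    sInf (g '' S) ≤ sInf (h '' S) + 1 := by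
  have hbdd : BddBelow (g '' S) := ⟨0, by rintro _ ⟨x, hx, rfl⟩; exact hg0 x⟩
  have h1 : ∀ x ∈ S, sInf (g '' S) - 1 ≤ h x := by
    intro x hx
    have := csInf_le hbdd ⟨x, hx, rfl⟩
    linarith [hle x hx]
  have h2 : sInf (g '' S) - 1 ≤ sInf (h '' S) :=
    le_csInf (hS.image h) (by rintro _ ⟨x, hx, rfl⟩; exact h1 x hx)
  linarith

/-- one-sided sensitivity of the widened utility -/
lemma uWide_sens (q θ : ℝ) (hθ : 0 < θ) (s s' : Multiset EReal)
    (hc : Multiset.card s = Multiset.card s')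
    (hcount : ∀ z : ℝ, |((s.filter (fun t => t ≤ (z : EReal))).card : ℝ) -
      ((s'.filter (fun t => t ≤ (z : EReal))).card : ℝ)| ≤ 1) (y : ℝ) :
    uWide q θ s y ≤ uWide q θ s' y + 1 := by
  unfold uWide
  have hS : (Set.Icc (y - θ) (y + θ)).Nonempty := Set.nonempty_Icc.2 (by linarith)
  have key : sInf ((fun z : ℝ =>
        |((s'.filter (fun t => t ≤ (z : EReal))).card : ℝ) - q * (Multiset.card s' : ℝ)|) ''
        Set.Icc (y - θ) (y + θ))
      ≤ sInf ((fun z : ℝ =>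
        |((s.filter (fun t => t ≤ (z : EReal))).card : ℝ) - q * (Multiset.card s : ℝ)|) ''
        Set.Icc (y - θ) (y + θ)) + 1 := by
    apply sInf_image_le hS (fun x => abs_nonneg _)
    intro z _
    have h := hcount z
    rw [abs_sub_comm] at h
    calc |((s'.filter (fun t => t ≤ (z : EReal))).card : ℝ) - q * (Multiset.card s' : ℝ)|
        ≤ |((s'.filter (fun t => t ≤ (z : EReal))).card : ℝ) -
            ((s.filter (fun t => t ≤ (z : EReal))).card : ℝ)| +
          |((s.filter (fun t => t ≤ (z : EReal))).card : ℝ) - q * (Multiset.card s' : ℝ)| :=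
          abs_sub_le _ _ _
      _ ≤ |((s.filter (fun t => t ≤ (z : EReal))).card : ℝ) - q * (Multiset.card s : ℝ)| + 1 := by
          rw [hc]; linarith
  linarith

/-- pointwise density bound gives measure comparison -/
lemma measure_comp (ε R : ℝ) (hε : 0 < ε) (u u' : ℝ → ℝ)
    (hsens : ∀ y ∈ Set.Icc (-R) R, u y ≤ u' y + 1) (E : Set ℝ) (hE : MeasurableSet E) :
    ((volume.restrict (Set.Icc (-R) R)).withDensity
        (fun y => ENNReal.ofReal (Real.exp (ε / 2 * u y)))) E
      ≤ ENNReal.ofReal (Real.exp (ε / 2)) *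
        ((volume.restrict (Set.Icc (-R) R)).withDensity
          (fun y => ENNReal.ofReal (Real.exp (ε / 2 * u' y)))) E := by
  rw [withDensity_apply _ hE, withDensity_apply _ hE, ← lintegral_const_mul' _ _ (by simp)]
  apply lintegral_mono_ae
  have hmem : ∀ᵐ y ∂((volume.restrict (Set.Icc (-R) R)).restrict E),
      y ∈ Set.Icc (-R) R := by
    apply Filter.Eventually.filter_mono (ae_mono Measure.restrict_le_self)
    exact ae_restrict_mem measurableSet_Icc
  filter_upwards [hmem] with y hy
  have h1 : u y ≤ u' y + 1 := hsens y hy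
  have h2 : Real.exp (ε / 2 * u y) ≤ Real.exp (ε / 2) * Real.exp (ε / 2 * u' y) := by
    rw [← Real.exp_add]
    apply Real.exp_le_exp.2
    nlinarith
  calc ENNReal.ofReal (Real.exp (ε / 2 * u y))
      ≤ ENNReal.ofReal (Real.exp (ε / 2) * Real.exp (ε / 2 * u' y)) :=
        ENNReal.ofReal_le_ofReal h2
    _ = ENNReal.ofReal (Real.exp (ε / 2)) * ENNReal.ofReal (Real.exp (ε / 2 * u' y)) :=
        ENNReal.ofReal_mul (Real.exp_nonneg _)

/-- **Privacy of the widened exponential mechanism.** For every `N ≥ 1`, `q ∈ (0,1)`,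
`R > 0`, `θ ∈ (0,R)`, and `ε > 0`, `DPWide(·, ε, (q, [-R,R], θ))` is `ε`-differentially
private on size-`N` multisets; in particular, the utility `u_s(y)` changes by at most `1`,
for every `y ∈ [-R,R]`, when one element of `s` is changed. -/
theorem dpWide_is_DP
    (N : ℕ) (hN : 1 ≤ N) (q R θ ε : ℝ)
    (hq : q ∈ Set.Ioo (0 : ℝ) 1) (hR : 0 < R) (hθ : θ ∈ Set.Ioo (0 : ℝ) R) (hε : 0 < ε) :
    IsDP N (dpWide ε q R θ) ε ∧
    (∀ s s' : Multiset EReal, Multiset.card s = N → Multiset.card s' = N →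
      msDist s s' = 1 → ∀ y ∈ Set.Icc (-R) R,
        |uWide q θ s y - uWide q θ s' y| ≤ 1) := by
  have hθ0 : 0 < θ := hθ.1
  -- one-sided sensitivity for all neighbors
  have sens1 : ∀ s s' : Multiset EReal, Multiset.card s = N → Multiset.card s' = N →
      msDist s s' = 1 → ∀ y : ℝ, uWide q θ s y ≤ uWide q θ s' y + 1 := by
    intro s s' hs hs' hd y
    have hc : Multiset.card s = Multiset.card s' := by rw [hs, hs']
    exact uWide_sens q θ hθ0 s s' hc (neighbor_count s s' hc hd) y
  have msDist_symm : ∀ s s' : Multiset EReal, msDist s s' = msDist s' s := by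
    intro s s'
    unfold msDist
    rw [Nat.add_comm]
  constructor
  · -- differential privacy
    intro d d' hd hd' hdist E hE
    have hdist' : msDist d' d = 1 := by rw [msDist_symm]; exact hdist
    have h1 : ∀ y ∈ Set.Icc (-R) R, uWide q θ d y ≤ uWide q θ d' y + 1 :=
      fun y _ => sens1 d d' hd hd' hdist y
    have h2 : ∀ y ∈ Set.Icc (-R) R, uWide q θ d' y ≤ uWide q θ d y + 1 :=
      fun y _ => sens1 d' d hd' hd hdist' y
    set c := ENNReal.ofReal (Real.exp (ε / 2)) with hc
    have hc0 : c ≠ 0 := by simp [hc, Real.exp_pos]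
    have hctop : c ≠ ⊤ := by simp [hc]
    set μ := (volume.restrict (Set.Icc (-R) R)).withDensity
      (fun y => ENNReal.ofReal (Real.exp (ε / 2 * uWide q θ d y))) with hμ
    set μ' := (volume.restrict (Set.Icc (-R) R)).withDensity
      (fun y => ENNReal.ofReal (Real.exp (ε / 2 * uWide q θ d' y))) with hμ'
    have hμE : μ E ≤ c * μ' E := measure_comp ε R hε _ _ h1 E hE
    have hμu : μ' Set.univ ≤ c * μ Set.univ :=
      measure_comp ε R hε _ _ h2 Set.univ MeasurableSet.univ
    have hinv : (μ Set.univ)⁻¹ ≤ c * (μ' Set.univ)⁻¹ := by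
      have hdiv : μ' Set.univ / c ≤ μ Set.univ :=
        ENNReal.div_le_of_le_mul (by rwa [mul_comm] at hμu)
      have : (μ Set.univ)⁻¹ ≤ (μ' Set.univ / c)⁻¹ := ENNReal.inv_le_inv.2 hdiv
      rwa [ENNReal.inv_div (Or.inl hctop) (Or.inl hc0), div_eq_mul_inv] at this
    show (dpWide ε q R θ d) E ≤ ENNReal.ofReal (Real.exp ε) * (dpWide ε q R θ d') E
    have hval : ∀ s : Multiset EReal, (dpWide ε q R θ s) E =
        (((volume.restrict (Set.Icc (-R) R)).withDensity
          (fun y => ENNReal.ofReal (Real.exp (ε / 2 * uWide q θ s y)))) Set.univ)⁻¹ *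
        (((volume.restrict (Set.Icc (-R) R)).withDensity
          (fun y => ENNReal.ofReal (Real.exp (ε / 2 * uWide q θ s y)))) E) := by
      intro s
      simp [dpWide, Measure.smul_apply, smul_eq_mul]
    rw [hval d, hval d', ← hμ, ← hμ']
    have hcc : ENNReal.ofReal (Real.exp ε) = c * c := by
      rw [hc, ← ENNReal.ofReal_mul (Real.exp_nonneg _), ← Real.exp_add]
      norm_num
    calc (μ Set.univ)⁻¹ * μ E ≤ (c * (μ' Set.univ)⁻¹) * (c * μ' E) :=
          mul_le_mul' hinv hμE
      _ = (c * c) * ((μ' Set.univ)⁻¹ * μ' E) := by ring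
      _ = ENNReal.ofReal (Real.exp ε) * ((μ' Set.univ)⁻¹ * μ' E) := by rw [hcc]
  · -- sensitivity
    intro s s' hs hs' hd y _
    have hd' : msDist s' s = 1 := by rw [msDist_symm]; exact hd
    rw [abs_sub_le_iff]
    constructor
    · linarith [sens1 s s' hs hs' hd y]
    · linarith [sens1 s' s hs' hs hd' y]
end
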